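/- arXiv:2304.14111 — 6 statements merged into one kernel-verified Lean document; each statement's English description precedes it below -/
import Mathlib

section
/- Let A be an n×n positive matrix with a_{ji} = 1/a_{ij}, let λ > 0 and let w ∈ ℝ^n_+ be a positive vector with A w = λ w. If a_{ij} > 1 and a_{ik} ≥ a_{jk} for all k ≠ i,j, then w_i > w_j. -/
/-- For a positive reciprocal matrix with a positive eigenvector `w`
(`A w = λ w`, `λ > 0`), if `A i j > 1` and row `i` dominates row `j` off `i, j`,
then `w i > w j`. -/
theorem stmt_1 (n : ℕ) (A : Fin n → Fin n → ℝ)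
    (hpos : ∀ i j, 0 < A i j)
    (hrec : ∀ i j, A j i = 1 / A i j)
    (lam : ℝ) (hlam : 0 < lam)
    (w : Fin n → ℝ) (hw : ∀ k, 0 < w k)
    (heig : ∀ p, ∑ k, A p k * w k = lam * w p)
    (i j : Fin n)
    (hij : 1 < A i j)
    (hdom : ∀ k, k ≠ i → k ≠ j → A j k ≤ A i k) :
    w j < w i := by
  have hAjj : A j j = 1 := by
    have h := hrec j j
    have hp := hpos j j
    field_simp at h
    nlinarith
  have hAji : A j i < 1 := by
    rw [hrec i j]
    rw [div_lt_one (by positivity)]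
    exact hij
  have key : lam * w j < lam * w i := by
    rw [← heig i, ← heig j]
    refine Finset.sum_lt_sum ?_ ⟨j, Finset.mem_univ j, ?_⟩
    · intro k _
      by_cases hk1 : k = i
      · subst hk1
        have h := hrec k k
        have hp := hpos k k
        field_simp at h
        have hAkk : A k k = 1 := by nlinarith
        rw [hAkk]
        nlinarith [hw k, hAji]
      by_cases hk2 : k = j
      · subst hk2
        rw [hAjj]
        nlinarith [hw k]
      · exact mul_le_mul_of_nonneg_right (hdom k hk1 hk2) (hw k).le
    · rw [hAjj]; nlinarith [hw j]
  exact lt_of_mul_lt_mul_left key hlam.le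
end

section
/- Let G = (N, E) be a finite directed acyclic graph and α > 1. Define the complete pairwise comparison matrix C by: c_{ii} = 1; c_{ij} = α if there is a nonempty directed walk from i to j in G; c_{ij} = 1/α if there is a nonempty directed walk from j to i; and c_{ij} = 1 otherwise (entries chosen consistently with reciprocity, which is possible since G is acyclic). Then for every triad {i,j,k}, the triad inconsistency TI_{ijk}(C) = max{ c_{ik}/(c_{ij} c_{jk}), (c_{ij} c_{jk})/c_{ik} } is at most α. -/
set_option maxHeartbeats 2000000


/-- For a finite DAG `(V, E)` and `α > 1`, the reachability-based
complete pairwise comparison matrix `C` (`C i j = α` if `j` is reachable from `i`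
by a nonempty directed walk, `1/α` if `i` is reachable from `j`, `1` otherwise,
with `C i i = 1`) has every triad inconsistency at most `α`. -/
theorem stmt_3 {V : Type*} [Fintype V] (E : V → V → Prop)
    (hacyc : ∀ v, ¬ Relation.TransGen E v v)
    (α : ℝ) (hα : 1 < α)
    (C : V → V → ℝ)
    (hdiag : ∀ i, C i i = 1)
    (hfwd : ∀ i j, Relation.TransGen E i j → C i j = α)
    (hbwd : ∀ i j, Relation.TransGen E j i → C i j = 1 / α)
    (hnone : ∀ i j, i ≠ j → ¬ Relation.TransGen E i j → ¬ Relation.TransGen E j i →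
      C i j = 1) :
    ∀ i j k, max (C i k / (C i j * C j k)) ((C i j * C j k) / C i k) ≤ α := by
  have hpos : (0:ℝ) < α := lt_trans one_pos hα
  have tri : ∀ a b, (Relation.TransGen E a b ∧ C a b = α) ∨
      (Relation.TransGen E b a ∧ C a b = 1/α) ∨
      (¬Relation.TransGen E a b ∧ ¬Relation.TransGen E b a ∧ C a b = 1) := by
    intro a b
    by_cases ha : Relation.TransGen E a b
    · exact Or.inl ⟨ha, hfwd a b ha⟩
    by_cases hb : Relation.TransGen E b a
    · exact Or.inr (Or.inl ⟨hb, hbwd a b hb⟩)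
    by_cases hab : a = b
    · subst hab; exact Or.inr (Or.inr ⟨ha, hb, hdiag a⟩)
    · exact Or.inr (Or.inr ⟨ha, hb, hnone a b hab ha hb⟩)
  intro i j k
  rcases tri i j with ⟨hij, eij⟩ | ⟨hij, eij⟩ | ⟨hij, hji, eij⟩ <;>
  rcases tri j k with ⟨hjk, ejk⟩ | ⟨hjk, ejk⟩ | ⟨hjk, hkj, ejk⟩ <;>
  rcases tri i k with ⟨hik, eik⟩ | ⟨hik, eik⟩ | ⟨hik, hki, eik⟩ <;>
  rw [eij, ejk, eik] <;>
  first
  | exact absurd ((hij.trans hjk).trans hik) (hacyc i)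
  | exact absurd (hij.trans hjk) hik
  | exact absurd (hik.trans hij) hkj
  | exact absurd (hjk.trans hik) hji
  | exact absurd (hij.trans hik) hjk
  | exact absurd (hik.trans hjk) hij
  | exact absurd (hik.trans (hjk.trans hij)) (hacyc i)
  | exact absurd (hjk.trans hij) hki
  | (rw [max_le_iff]; constructor <;>
      rw [div_le_iff₀ (by positivity)] <;> field_simp <;>
      (try rw [div_le_iff₀ (by positivity)]) <;>
      nlinarith [hpos, hα, mul_pos hpos hpos, sq_nonneg α, sq_nonneg (α - 1)])
end

section
/- Let A be a positive n×n pairwise comparison matrix. The function f(v) = ∑_{i<j} (log a_{ij} − v_i + v_j)^2 on ℝ^n is minimized over the hyperplane {v : ∑_i v_i = 0} uniquely at v given by v_i = (1/n) ∑_j log a_{ij}. -/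
/-!
Since `a_ji = 1 / a_ij`, the matrix `L_ij = log a_ij` is antisymmetric, so the summand of `f` is
symmetric in `(i, j)` and vanishes on the diagonal: `2 f` is the sum over all ordered pairs.
The residual `r_ij = L_ij - v*_i + v*_j` of the row means `v*` has zero row sums by the choice of
`v*` and hence, by antisymmetry, zero column sums. Writing `v = v* + u`, the cross term
`∑ r_ij (u_i - u_j)` therefore vanishes, and on the hyperplane `∑ u_i = 0` the error grows by
`∑_{i,j} (u_i - u_j)^2 = 2 n ∑ u_i^2`, which is positive unless `u = 0`.
-/

open Finset

section PairSums

variable {ι M : Type*} [Fintype ι] [LinearOrder ι] [AddCommMonoid M]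

theorem sum_sum_eq_two_nsmul_sum_filter_lt (g : ι → ι → M)
    (hsymm : ∀ i j, g j i = g i j) (hdiag : ∀ i, g i i = 0) :
    ∑ i, ∑ j, g i j = 2 • ∑ p ∈ univ.filter (fun p : ι × ι => p.1 < p.2), g p.1 p.2 := by
  have hsplit : ∀ p : ι × ι, g p.1 p.2 =
      (if p.1 < p.2 then g p.1 p.2 else 0) + (if p.2 < p.1 then g p.2 p.1 else 0) := by
    rintro ⟨i, j⟩
    rcases lt_trichotomy i j with h | rfl | h
    · simp [h, h.not_gt]
    · simp [hdiag]
    · simp [h, h.not_gt, hsymm]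
  rw [← Fintype.sum_prod_type', Fintype.sum_congr _ _ hsplit, sum_add_distrib,
    Fintype.sum_equiv (Equiv.prodComm ι ι) (fun p => if p.2 < p.1 then g p.2 p.1 else 0)
      (fun p => if p.1 < p.2 then g p.1 p.2 else 0) (fun _ => rfl), ← two_nsmul, sum_filter]

end PairSums

section LeastSquares

variable {ι : Type*} [Fintype ι]

theorem sum_sum_eq_zero_of_antisymm {L : ι → ι → ℝ} (hL : ∀ i j, L j i = -L i j) :
    ∑ i, ∑ j, L i j = 0 := by
  have h : ∑ i, ∑ j, L j i = -∑ i, ∑ j, L i j := by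
    simp only [← sum_neg_distrib]
    exact sum_congr rfl fun i _ => sum_congr rfl fun j _ => hL i j
  rw [sum_comm] at h
  linarith

theorem sum_sum_sub_sq (u : ι → ℝ) :
    ∑ i, ∑ j, (u i - u j) ^ 2 = 2 * (Fintype.card ι * ∑ i, u i ^ 2 - (∑ i, u i) ^ 2) := by
  simp only [sub_sq, sum_add_distrib, sum_sub_distrib, sum_const, card_univ, nsmul_eq_mul,
    mul_assoc, ← mul_sum, ← sum_mul, sq (∑ i, u i)]
  ring

theorem sum_sum_mul_sub_eq_zero {r : ι → ι → ℝ} (hrow : ∀ i, ∑ j, r i j = 0)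
    (hcol : ∀ j, ∑ i, r i j = 0) (u : ι → ℝ) :
    ∑ i, ∑ j, r i j * (u i - u j) = 0 := by
  simp only [mul_sub, sum_sub_distrib]
  rw [sum_comm (f := fun i j => r i j * u j)]
  simp only [← sum_mul, hrow, hcol, zero_mul, sum_const_zero, sub_zero]

def lsqError (L : ι → ι → ℝ) (v : ι → ℝ) : ℝ :=
  ∑ i, ∑ j, (L i j - v i + v j) ^ 2

theorem lsqError_eq_add {L : ι → ι → ℝ} (hL : ∀ i j, L j i = -L i j) {w : ι → ℝ}
    (hrow : ∀ i, ∑ j, L i j = Fintype.card ι * w i) (hw : ∑ i, w i = 0)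
    {v : ι → ℝ} (hv : ∑ i, v i = 0) :
    lsqError L v = lsqError L w + 2 * Fintype.card ι * ∑ i, (v i - w i) ^ 2 := by
  set r : ι → ι → ℝ := fun i j => L i j - w i + w j
  have hr_row : ∀ i, ∑ j, r i j = 0 := fun i => by
    simp only [r, sum_add_distrib, sum_sub_distrib, hrow, hw, sum_const, card_univ,
      nsmul_eq_mul]
    ring
  have hr_col : ∀ j, ∑ i, r i j = 0 := fun j => by
    have : ∀ i, r i j = -r j i := fun i => by simp only [r, hL j i]; ring
    simp only [this, sum_neg_distrib, hr_row, neg_zero]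
  have hcross := sum_sum_mul_sub_eq_zero hr_row hr_col (v - w)
  have hvar := sum_sum_sub_sq (v - w)
  simp only [Pi.sub_apply, sum_sub_distrib, hv, hw, sub_zero] at hcross hvar
  calc lsqError L v = ∑ i, ∑ j, (r i j ^ 2 - 2 * (r i j * ((v i - w i) - (v j - w j)))
        + ((v i - w i) - (v j - w j)) ^ 2) := by
        unfold lsqError; congr! 2 with i - j -; ring
    _ = lsqError L w + 2 * Fintype.card ι * ∑ i, (v i - w i) ^ 2 := by
        simp only [sum_add_distrib, sum_sub_distrib, ← mul_sum, hcross, hvar]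
        unfold lsqError
        ring

end LeastSquares

theorem stmt_10_general (n : ℕ) (A : Fin n → Fin n → ℝ)
    (hrec : ∀ i j, A j i = 1 / A i j)
    (f : (Fin n → ℝ) → ℝ)
    (hf : ∀ v, f v = ∑ p ∈ Finset.univ.filter (fun p : Fin n × Fin n => p.1 < p.2),
      (Real.log (A p.1 p.2) - v p.1 + v p.2) ^ 2)
    (vstar : Fin n → ℝ)
    (hvstar : ∀ i, vstar i = (∑ j, Real.log (A i j)) / n) :
    (∑ i, vstar i = 0) ∧
    ∀ v : Fin n → ℝ, (∑ i, v i = 0) →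
      f vstar ≤ f v ∧ (f v = f vstar → v = vstar) := by
  set L : Fin n → Fin n → ℝ := fun i j => Real.log (A i j)
  have hL : ∀ i j, L j i = -L i j := fun i j => by
    change Real.log (A j i) = -Real.log (A i j)
    rw [hrec, one_div, Real.log_inv]
  have hrow : ∀ i, ∑ j, L i j = Fintype.card (Fin n) * vstar i := fun i => by
    rw [hvstar, Fintype.card_fin, mul_div_cancel₀ _ (Nat.cast_ne_zero.mpr i.pos.ne')]
  have hsum : ∑ i, vstar i = 0 := by
    simp only [hvstar, ← sum_div]
    exact div_eq_zero_iff.mpr (Or.inl (sum_sum_eq_zero_of_antisymm hL))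
  have h2f : ∀ v, 2 * f v = lsqError L v := fun v => by
    rw [lsqError, sum_sum_eq_two_nsmul_sum_filter_lt _ (fun i j => by rw [hL]; ring)
      (fun i => by simp [show L i i = 0 by linarith [hL i i]]), hf, two_nsmul, two_mul]
  refine ⟨hsum, fun v hv => ?_⟩
  have hdecomp := lsqError_eq_add hL hrow hsum hv
  rw [← h2f, ← h2f] at hdecomp
  have hdist : 0 ≤ ∑ i, (v i - vstar i) ^ 2 := by positivity
  refine ⟨by nlinarith, fun heq => funext fun i => ?_⟩
  have hn : (0 : ℝ) < Fintype.card (Fin n) := by simp [i.pos]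
  have hzero : ∑ i, (v i - vstar i) ^ 2 = 0 := by nlinarith
  have hsq := (Fintype.sum_eq_zero_iff_of_nonneg (fun i => sq_nonneg (v i - vstar i))).mp hzero
  exact sub_eq_zero.mp (pow_eq_zero_iff two_ne_zero |>.mp (congrFun hsq i))

/-- The logarithmic least squares objective
`f v = ∑_{i<j} (log (A i j) - v i + v j)^2` is minimized over the hyperplane
`{v : ∑ i, v i = 0}` uniquely at `v i = (1/n) * ∑ j, log (A i j)`. -/
theorem stmt_10 (n : ℕ) (hn : 0 < n) (A : Fin n → Fin n → ℝ)
    (hpos : ∀ i j, 0 < A i j)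
    (hrec : ∀ i j, A j i = 1 / A i j)
    (f : (Fin n → ℝ) → ℝ)
    (hf : ∀ v, f v = ∑ p ∈ Finset.univ.filter (fun p : Fin n × Fin n => p.1 < p.2),
      (Real.log (A p.1 p.2) - v p.1 + v p.2) ^ 2)
    (vstar : Fin n → ℝ)
    (hvstar : ∀ i, vstar i = (∑ j, Real.log (A i j)) / n) :
    (∑ i, vstar i = 0) ∧
    ∀ v : Fin n → ℝ, (∑ i, v i = 0) →
      f vstar ≤ f v ∧ (f v = f vstar → v = vstar) :=
  stmt_10_general n A hrec f hf vstar hvstar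
end

section
/- Consider the matrix B(x) with rows/columns 1..4 given by b_{12}=2, b_{24}=8, b_{23}=b_{34}=1, b_{13}=x_{13}, b_{14}=x_{14} (and reciprocal entries). The maximum triad inconsistency t(x) = max{TI_{123}, TI_{124}, TI_{134}, TI_{234}} satisfies t(x) ≥ 8 for all positive x_{13}, x_{14}, and t(x) = 8 if and only if 1/4 ≤ x_{13} ≤ 16, 2 ≤ x_{14} ≤ 128, and 1/8 ≤ x_{13}/x_{14} ≤ 8. -/
/-- For the 4×4 example with `b12 = 2, b24 = 8, b23 = b34 = 1` and
missing entries `x13, x14 > 0`, the maximum triad inconsistency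
`t = max {TI₁₂₃, TI₁₂₄, TI₁₃₄, TI₂₃₄}` satisfies `t ≥ 8`, with equality iff
`1/4 ≤ x13 ≤ 16`, `2 ≤ x14 ≤ 128` and `1/8 ≤ x13/x14 ≤ 8`. -/
theorem stmt_14 (x13 x14 : ℝ) (h13 : 0 < x13) (h14 : 0 < x14) :
    8 ≤ max (max (max (x13 / 2) (2 / x13)) (max (x14 / 16) (16 / x14)))
          (max (max (x14 / x13) (x13 / x14)) 8) ∧
    (max (max (max (x13 / 2) (2 / x13)) (max (x14 / 16) (16 / x14)))
          (max (max (x14 / x13) (x13 / x14)) 8) = 8 ↔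
      (1 / 4 ≤ x13 ∧ x13 ≤ 16) ∧ (2 ≤ x14 ∧ x14 ≤ 128) ∧
      (1 / 8 ≤ x13 / x14 ∧ x13 / x14 ≤ 8)) := by
  have hge : (8:ℝ) ≤ max (max (max (x13 / 2) (2 / x13)) (max (x14 / 16) (16 / x14)))
          (max (max (x14 / x13) (x13 / x14)) 8) :=
    le_max_of_le_right (le_max_right _ 8)
  refine ⟨hge, ?_⟩
  have heq : (max (max (max (x13 / 2) (2 / x13)) (max (x14 / 16) (16 / x14)))
          (max (max (x14 / x13) (x13 / x14)) 8) = 8) ↔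
      max (max (max (x13 / 2) (2 / x13)) (max (x14 / 16) (16 / x14)))
          (max (max (x14 / x13) (x13 / x14)) 8) ≤ 8 :=
    ⟨le_of_eq, fun h => le_antisymm h hge⟩
  rw [heq]
  simp only [max_le_iff]
  constructor
  · rintro ⟨⟨⟨h1, h2⟩, h3, h4⟩, ⟨h5, h6⟩, -⟩
    rw [div_le_iff₀ h13] at h2
    rw [div_le_iff₀ h14] at h4
    rw [div_le_iff₀ h13] at h5
    have h6' := (div_le_iff₀ h14).mp h6
    refine ⟨⟨by linarith, by linarith⟩, ⟨by linarith, by linarith⟩, ?_, h6⟩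
    rw [le_div_iff₀ h14]; linarith
  · rintro ⟨⟨ha, hb⟩, ⟨hc, hd⟩, he, hf⟩
    rw [le_div_iff₀ h14] at he
    refine ⟨⟨⟨by linarith, ?_⟩, by linarith, ?_⟩, ⟨?_, hf⟩, le_refl _⟩
    · rw [div_le_iff₀ h13]; linarith
    · rw [div_le_iff₀ h14]; linarith
    · rw [div_le_iff₀ h13]; linarith
end

section
/- With b_{12}=2, b_{24}=8, b_{23}=b_{34}=1 fixed, among all (x_{13}, x_{14}) achieving the minimal maximum triad inconsistency t(x) = 8, the unique pair further minimizing the second-largest triad inconsistency max{TI_{123}, TI_{124}, TI_{134}} is x_{13} = 4, x_{14} = 8, where this second-level value equals 2. -/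
/-- Among all `(x13, x14)` achieving the minimal maximum triad
inconsistency `t = 8` of the incomplete 4×4 example, the unique pair further
minimizing the second-largest level `g = max {TI₁₂₃, TI₁₂₄, TI₁₃₄}` is
`x13 = 4, x14 = 8`, where `g = 2`. -/
theorem stmt_15
    (t g : ℝ → ℝ → ℝ)
    (ht : ∀ x13 x14, t x13 x14 =
      max (max (max (x13 / 2) (2 / x13)) (max (x14 / 16) (16 / x14)))
        (max (max (x14 / x13) (x13 / x14)) 8))
    (hg : ∀ x13 x14, g x13 x14 =
      max (max (max (x13 / 2) (2 / x13)) (max (x14 / 16) (16 / x14)))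
        (max (x14 / x13) (x13 / x14))) :
    t 4 8 = 8 ∧ g 4 8 = 2 ∧
    ∀ x13 x14 : ℝ, 0 < x13 → 0 < x14 → t x13 x14 = 8 →
      2 ≤ g x13 x14 ∧ (g x13 x14 = 2 → x13 = 4 ∧ x14 = 8) := by
  refine ⟨by rw [ht]; norm_num, by rw [hg]; norm_num, ?_⟩
  intro x13 x14 h13 h14 _
  rw [hg]
  have ha : x13 / 2 ≤ max (max (max (x13 / 2) (2 / x13)) (max (x14 / 16) (16 / x14)))
      (max (x14 / x13) (x13 / x14)) :=
    le_max_of_le_left (le_max_of_le_left (le_max_left _ _))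
  have hb : 16 / x14 ≤ max (max (max (x13 / 2) (2 / x13)) (max (x14 / 16) (16 / x14)))
      (max (x14 / x13) (x13 / x14)) :=
    le_max_of_le_left (le_max_of_le_right (le_max_right _ _))
  have hc : x14 / x13 ≤ max (max (max (x13 / 2) (2 / x13)) (max (x14 / 16) (16 / x14)))
      (max (x14 / x13) (x13 / x14)) :=
    le_max_of_le_right (le_max_left _ _)
  constructor
  · by_contra h
    push_neg at h
    have h1 : x13 / 2 < 2 := lt_of_le_of_lt ha h
    have h2 : 16 / x14 < 2 := lt_of_le_of_lt hb h
    have h3 : x14 / x13 < 2 := lt_of_le_of_lt hc h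
    rw [div_lt_iff₀ (by norm_num : (0:ℝ) < 2)] at h1
    rw [div_lt_iff₀ h14] at h2
    rw [div_lt_iff₀ h13] at h3
    linarith
  · intro hgeq
    rw [hgeq] at ha hb hc
    rw [div_le_iff₀ (by norm_num : (0:ℝ) < 2)] at ha
    rw [div_le_iff₀ h14] at hb
    rw [div_le_iff₀ h13] at hc
    constructor <;> linarith
end

section
/- Let G be a finite directed acyclic graph on n vertices and α > 1, and let C be the reachability-based pairwise comparison matrix (c_{ij} = α if j is reachable from i, 1/α if i is reachable from j, 1 otherwise). If w is any positive vector with C w = λ w for some λ > 0, then (i,j) ∈ E implies w_i > w_j; that is, the Perron eigenvector of C respects the partial order induced by G. -/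
/-- For a finite DAG and the reachability-based matrix `C`, any
positive eigenvector `w` of `C` (with positive eigenvalue) respects the partial
order induced by the DAG: `(i, j) ∈ E` implies `w i > w j`. -/
theorem stmt_17 {V : Type*} [Fintype V] (E : V → V → Prop)
    (hacyc : ∀ v, ¬ Relation.TransGen E v v)
    (α : ℝ) (hα : 1 < α)
    (C : V → V → ℝ)
    (hdiag : ∀ i, C i i = 1)
    (hfwd : ∀ i j, Relation.TransGen E i j → C i j = α)
    (hbwd : ∀ i j, Relation.TransGen E j i → C i j = 1 / α)
    (hnone : ∀ i j, i ≠ j → ¬ Relation.TransGen E i j → ¬ Relation.TransGen E j i →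
      C i j = 1)
    (lam : ℝ) (hlam : 0 < lam)
    (w : V → ℝ) (hw : ∀ k, 0 < w k)
    (heig : ∀ p, ∑ k, C p k * w k = lam * w p) :
    ∀ i j, E i j → w j < w i := by
  intro i j hij
  have hT : Relation.TransGen E i j := Relation.TransGen.single hij
  have hα0 : (0:ℝ) < α := lt_trans one_pos hα
  have h1 : 1 / α ≤ 1 := by
    rw [div_le_one hα0]; exact hα.le
  have h1α : 1 / α ≤ α := le_trans h1 hα.le
  have hle : ∀ k, C j k * w k ≤ C i k * w k := by
    intro k
    refine mul_le_mul_of_nonneg_right ?_ (hw k).le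
    by_cases hjk : Relation.TransGen E j k
    · rw [hfwd j k hjk, hfwd i k (hT.trans hjk)]
    · by_cases hkj : Relation.TransGen E k j
      · rw [hbwd j k hkj]
        by_cases hik : Relation.TransGen E i k
        · rw [hfwd i k hik]; exact h1α
        · by_cases hki : Relation.TransGen E k i
          · rw [hbwd i k hki]
          · by_cases hik' : i = k
            · rw [← hik', hdiag]; exact h1
            · rw [hnone i k hik' hik hki]; exact h1
      · have hki : ¬ Relation.TransGen E k i := fun h => hkj (h.trans hT)
        have hCjk : C j k = 1 := by
          by_cases hjk' : j = k
          · rw [← hjk', hdiag]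
          · exact hnone j k hjk' hjk hkj
        rw [hCjk]
        by_cases hik : Relation.TransGen E i k
        · rw [hfwd i k hik]; exact hα.le
        · by_cases hik' : i = k
          · rw [← hik', hdiag]
          · rw [hnone i k hik' hik hki]
  have hstrict : C j j * w j < C i j * w j := by
    rw [hdiag, hfwd i j hT, one_mul]
    nlinarith [hw j]
  have hsum : ∑ k, C j k * w k < ∑ k, C i k * w k :=
    Finset.sum_lt_sum (fun k _ => hle k) ⟨j, Finset.mem_univ j, hstrict⟩
  rw [heig i, heig j] at hsum
  exact lt_of_mul_lt_mul_left hsum hlam.le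
end
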